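/- The random time τ is a stopping time with respect to the filtration 𝔽^β = (𝓕^β_t)_{t≥0}, i.e. {τ ≤ t} ∈ 𝓕^β_t for every t ≥ 0. -/

import Mathlib

open MeasureTheory ProbabilityTheory

noncomputable section

/-- The information process: Brownian bridge between 0 and 0 on the random interval `[0, τ]`,
`β_t = W_t - (t / (τ ∨ t)) W_{τ ∨ t}`. -/
def infoProc {Ω : Type*} (W : ℝ → Ω → ℝ) (τ : Ω → ℝ) (t : ℝ) (ω : Ω) : ℝ :=
  W t ω - (t / max (τ ω) t) * W (max (τ ω) t) ω

/-- `W` is a standard Brownian motion on `(Ω, 𝓕, P)`: it starts at `0`, has continuous paths,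
independent increments, and Gaussian increments `W_t - W_s ∼ N(0, t - s)`. -/
structure IsStdBrownianMotion {Ω : Type*} [MeasurableSpace Ω] (P : Measure Ω)
    (W : ℝ → Ω → ℝ) : Prop where
  meas : ∀ t, Measurable (W t)
  init : ∀ ω, W 0 ω = 0
  cont : ∀ ω, Continuous fun t => W t ω
  indep_incr : ∀ (n : ℕ) (t : ℕ → ℝ), Monotone t →
    iIndepFun
      (fun i : Fin n => fun ω => W (t (i + 1)) ω - W (t i) ω) P
  gauss_incr : ∀ s t : ℝ, 0 ≤ s → s ≤ t →
    Measure.map (fun ω => W t ω - W s ω) P = gaussianReal 0 (Real.toNNReal (t - s))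

/-- The σ-algebra `σ(X)` generated by a real random variable `X`. -/
def sigmaGen {Ω : Type*} (X : Ω → ℝ) : MeasurableSpace Ω :=
  MeasurableSpace.comap X inferInstance

/-- The natural filtration of a process: `𝓕⁰_t = σ(β_s, 0 ≤ s ≤ t)`. -/
def natFilt {Ω : Type*} (β : ℝ → Ω → ℝ) (t : ℝ) : MeasurableSpace Ω :=
  ⨆ s ∈ Set.Icc (0 : ℝ) t, sigmaGen (β s)

/-- The σ-algebra `𝓝_P` generated by the `P`-null sets. -/
def nullSigma {Ω : Type*} [MeasurableSpace Ω] (P : Measure Ω) : MeasurableSpace Ω :=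
  MeasurableSpace.generateFrom {s : Set Ω | P s = 0}

/-- The completed natural filtration `𝓕ᴾ_t = 𝓕⁰_t ∨ 𝓝_P`. -/
def complFilt {Ω : Type*} [MeasurableSpace Ω] (P : Measure Ω) (β : ℝ → Ω → ℝ)
    (t : ℝ) : MeasurableSpace Ω :=
  natFilt β t ⊔ nullSigma P

/-- The filtration `𝓕^β_t = 𝓕⁰_{t+} ∨ 𝓝_P`, where `𝓕⁰_{t+} = ⋂_{u > t} 𝓕⁰_u`. -/
def rightFilt {Ω : Type*} [MeasurableSpace Ω] (P : Measure Ω) (β : ℝ → Ω → ℝ)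
    (t : ℝ) : MeasurableSpace Ω :=
  (⨅ u ∈ Set.Ioi t, natFilt β u) ⊔ nullSigma P

/-- The Gaussian density `p(s, x, y)` with variance `s` and mean `y`, evaluated at `x`. -/
def gaussDens (s x y : ℝ) : ℝ :=
  (Real.sqrt (2 * Real.pi * s))⁻¹ * Real.exp (-(x - y) ^ 2 / (2 * s))

/-- For `t > 0`, the density `φ_t(r, x)` of the Brownian bridge of length `r` at time `t < r`,
and `0` for `r ≤ t`. -/
def phi (t r x : ℝ) : ℝ :=
  if t < r then gaussDens (t * (r - t) / r) x 0 else 0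

/-- The a posteriori density `φ̂_t(r, x) = φ_t(r, x) / ∫_{(t,∞)} φ_t(v, x) μ(dv)` where `μ`
is the law of `τ`. -/
def phiHat (μ : Measure ℝ) (t r x : ℝ) : ℝ :=
  phi t r x / ∫ v in Set.Ioi t, phi t v x ∂μ

/-!
The bridge `β` vanishes identically on `[τ, ∞)`. Before `τ`, `β_q = β_{q'} = 0` forces
`W_q / q = W_{q'} / q'`; for fixed rationals `0 < q < q'` this is a null event, because `W_q` is
independent of the non-atomic increment `W_{q'} - W_q`. Hence, outside one null set depending only
on `W`, `τ ≤ t` holds iff `β` vanishes at all rationals of some interval `(t, r)`, an event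
of `𝓕⁰_{t+}`.
-/

section

variable {Ω : Type*}

lemma measurableSet_sup_nullSigma_of_ae_eq {m m₀ : MeasurableSpace Ω} {P : Measure[m₀] Ω}
    {s s' : Set Ω} (hs : MeasurableSet[m] s) (h : s =ᵐ[P] s') :
    MeasurableSet[m ⊔ nullSigma P] s' := by
  obtain ⟨h₁, h₂⟩ := ae_eq_set.mp h
  have hnull : ∀ {u : Set Ω}, P u = 0 → MeasurableSet[m ⊔ nullSigma P] u := fun hu =>
    le_sup_right (a := m) (b := nullSigma P) _ (MeasurableSpace.measurableSet_generateFrom hu)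
  have hs' : s' = (s ∩ (s \ s')ᶜ) ∪ (s' \ s) := by ext; simp; tauto
  rw [hs']
  exact ((le_sup_left (b := nullSigma P) _ hs).inter (hnull h₁).compl).union (hnull h₂)

lemma measurableSet_iInf_Ioi_biUnion {m : ℝ → MeasurableSpace Ω} (hm : Monotone m)
    {E : ℝ → Set Ω} (hE : Antitone E) (hEm : ∀ r, MeasurableSet[m r] (E r)) (t : ℝ) :
    MeasurableSet[⨅ u ∈ Set.Ioi t, m u] (⋃ r ∈ Set.Ioi t, E r) := by
  simp only [MeasurableSpace.measurableSet_iInf]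
  intro u hu
  have hrat : ⋃ r ∈ Set.Ioi t, E r = ⋃ q : ℚ, ⋃ (_ : (q : ℝ) ∈ Set.Ioo t u), E q := by
    refine subset_antisymm (Set.iUnion₂_subset fun r hr => ?_)
      (Set.iUnion₂_subset fun q hq => Set.subset_biUnion_of_mem (u := E) hq.1)
    obtain ⟨q, htq, hq⟩ := exists_rat_btwn (lt_min (Set.mem_Ioi.mp hr) (Set.mem_Ioi.mp hu))
    exact (hE (hq.le.trans (min_le_left _ _))).trans
      (Set.subset_iUnion₂ (s := fun (q : ℚ) (_ : (q : ℝ) ∈ Set.Ioo t u) => E q) q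
        ⟨htq, hq.trans_le (min_le_right _ _)⟩)
  rw [hrat]
  exact .iUnion fun q => .iUnion fun hq => hm hq.2.le _ (hEm q)

lemma natFilt_mono (β : ℝ → Ω → ℝ) : Monotone (natFilt β) := fun _ _ h =>
  biSup_mono fun _ hs => ⟨hs.1, hs.2.trans h⟩

lemma measurableSet_natFilt_preimage {β : ℝ → Ω → ℝ} {s u : ℝ} (hs : s ∈ Set.Icc 0 u)
    {B : Set ℝ} (hB : MeasurableSet B) : MeasurableSet[natFilt β u] (β s ⁻¹' B) :=
  le_iSup₂ (f := fun s (_ : s ∈ Set.Icc (0 : ℝ) u) => sigmaGen (β s)) s hs _ ⟨B, hB, rfl⟩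

lemma ProbabilityTheory.IndepFun.measure_setOf_eq_comp_eq_zero [MeasurableSpace Ω] {P : Measure Ω}
    [IsFiniteMeasure P] {α β : Type*} [MeasurableSpace α] [MeasurableSpace β]
    [MeasurableEq β] {X : Ω → α} {Y : Ω → β} (hXY : IndepFun X Y P)
    (hX : Measurable X) (hY : Measurable Y) [NullSingletonClass (P.map Y)] {f : α → β}
    (hf : Measurable f) : P {ω | Y ω = f (X ω)} = 0 := by
  have hD : MeasurableSet {p : α × β | p.2 = f p.1} :=
    measurableSet_eq_fun measurable_snd (hf.comp measurable_fst)
  change P ((fun ω => (X ω, Y ω)) ⁻¹' {p | p.2 = f p.1}) = 0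
  rw [← Measure.map_apply (hX.prodMk hY) hD,
    (indepFun_iff_map_prod_eq_prod_map_map hX.aemeasurable hY.aemeasurable).mp hXY,
    Measure.prod_apply hD]
  simp

namespace IsStdBrownianMotion

variable [MeasurableSpace Ω] {P : Measure Ω} {W : ℝ → Ω → ℝ}

lemma indepFun_sub (hW : IsStdBrownianMotion P W) {q q' : ℝ} (hq : 0 ≤ q) (hqq' : q ≤ q') :
    IndepFun (W q) (fun ω => W q' ω - W q ω) P := by
  let u : ℕ → ℝ := fun n => if n = 0 then 0 else if n = 1 then q else q'
  have hu : Monotone u := by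
    refine monotone_nat_of_le_succ fun n => ?_
    rcases n with _ | _ | n <;> simp [u, hq, hqq']
  simpa [u, hW.init] using (hW.indep_incr 2 u hu).indepFun (i := 0) (j := 1) (by decide)

lemma nullSingletonClass_map_sub (hW : IsStdBrownianMotion P W) {q q' : ℝ} (hq : 0 ≤ q)
    (hqq' : q < q') : NullSingletonClass (P.map fun ω => W q' ω - W q ω) := by
  rw [hW.gauss_incr q q' hq hqq'.le]
  exact nullSingletonClass_gaussianReal (by simpa using hqq')

lemma measure_mul_eq_mul_eq_zero [IsFiniteMeasure P] (hW : IsStdBrownianMotion P W) {q q' : ℝ}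
    (hq : 0 < q) (hqq' : q < q') : P {ω | q' * W q ω = q * W q' ω} = 0 := by
  have := hW.nullSingletonClass_map_sub hq.le hqq'
  have hset : {ω | q' * W q ω = q * W q' ω} = {ω | W q' ω - W q ω = (q' - q) / q * W q ω} := by
    ext ω
    change _ = _ ↔ _ = _
    rw [div_mul_eq_mul_div, eq_div_iff hq.ne']
    constructor <;> intro h <;> linarith
  rw [hset]
  exact (hW.indepFun_sub hq.le hqq'.le).measure_setOf_eq_comp_eq_zero (hW.meas q)
    ((hW.meas q').sub (hW.meas q)) (measurable_const_mul _)

lemma ae_mul_ne_mul [IsFiniteMeasure P] (hW : IsStdBrownianMotion P W) :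
    ∀ᵐ ω ∂P, ∀ q q' : ℚ, 0 < q → q < q' → (q' : ℝ) * W q ω ≠ q * W q' ω := by
  simp only [ae_all_iff, Filter.eventually_imp_distrib_left]
  intro q q' hq hqq'
  rw [ae_iff]
  simpa using hW.measure_mul_eq_mul_eq_zero (q := q) (q' := q') (by exact_mod_cast hq)
    (by exact_mod_cast hqq')

end IsStdBrownianMotion

section infoProc

variable {W : ℝ → Ω → ℝ} {τ : Ω → ℝ} {ω : Ω} {s : ℝ}

lemma infoProc_eq_zero_of_le (hs : 0 < s) (h : τ ω ≤ s) : infoProc W τ s ω = 0 := by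
  rw [infoProc, max_eq_right h, div_self hs.ne', one_mul, sub_self]

lemma infoProc_of_le (h : s ≤ τ ω) : infoProc W τ s ω = W s ω - s / τ ω * W (τ ω) ω := by
  rw [infoProc, max_eq_left h]

lemma exists_forall_infoProc_eq_zero_iff {t : ℝ} (ht : 0 ≤ t)
    (hω : ∀ q q' : ℚ, 0 < q → q < q' → (q' : ℝ) * W q ω ≠ q * W q' ω) :
    (∃ r > t, ∀ q : ℚ, (q : ℝ) ∈ Set.Ioo t r → infoProc W τ q ω = 0) ↔ τ ω ≤ t := by
  constructor
  · rintro ⟨r, htr, hr⟩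
    by_contra! htτ
    obtain ⟨q, htq, hq⟩ := exists_rat_btwn (lt_min htr htτ)
    obtain ⟨q', hqq', hq'⟩ := exists_rat_btwn hq
    have h₁ := hr q ⟨htq, (hqq'.trans hq').trans_le (min_le_left _ _)⟩
    have h₂ := hr q' ⟨htq.trans hqq', hq'.trans_le (min_le_left _ _)⟩
    rw [infoProc_of_le ((hqq'.trans hq').trans_le (min_le_right _ _)).le] at h₁
    rw [infoProc_of_le (hq'.trans_le (min_le_right _ _)).le] at h₂
    exact hω q q' (by exact_mod_cast ht.trans_lt htq) (by exact_mod_cast hqq')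
      (by linear_combination (q' : ℝ) * h₁ - (q : ℝ) * h₂)
  · intro h
    exact ⟨t + 1, by linarith, fun q hq =>
      infoProc_eq_zero_of_le (ht.trans_lt hq.1) (h.trans hq.1.le)⟩

end infoProc

end

theorem tau_stoppingTime_rightFilt_general {Ω : Type*} [MeasurableSpace Ω] (P : Measure Ω)
    [IsProbabilityMeasure P]
    (W : ℝ → Ω → ℝ) (hW : IsStdBrownianMotion P W)
    (τ : Ω → ℝ) :
    ∀ t : ℝ, 0 ≤ t →
      MeasurableSet[rightFilt P (infoProc W τ) t] {ω | τ ω ≤ t} := by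
  intro t ht
  let E : ℝ → Set Ω := fun r =>
    ⋂ q : ℚ, ⋂ (_ : (q : ℝ) ∈ Set.Ioo t r), infoProc W τ q ⁻¹' {0}
  have hE : Antitone E := fun r r' h =>
    Set.iInter₂_mono' fun q hq => ⟨q, ⟨hq.1, hq.2.trans_le h⟩, subset_rfl⟩
  have hEm : ∀ r, MeasurableSet[natFilt (infoProc W τ) r] (E r) := fun r =>
    .iInter fun q => .iInter fun hq =>
      measurableSet_natFilt_preimage ⟨ht.trans hq.1.le, hq.2.le⟩ (measurableSet_singleton 0)
  refine measurableSet_sup_nullSigma_of_ae_eq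
    (measurableSet_iInf_Ioi_biUnion (natFilt_mono _) hE hEm t) ?_
  filter_upwards [hW.ae_mul_ne_mul] with ω hω
  change (ω ∈ ⋃ r ∈ Set.Ioi t, E r) = (ω ∈ {ω | τ ω ≤ t})
  simpa [E] using exists_forall_infoProc_eq_zero_iff ht hω

/-- The random time `τ` is a stopping time with respect to the filtration `𝔽^β`:
`{τ ≤ t} ∈ 𝓕^β_t` for every `t ≥ 0`. -/
theorem tau_stoppingTime_rightFilt {Ω : Type*} [MeasurableSpace Ω] (P : Measure Ω)
    [IsProbabilityMeasure P] [P.IsComplete]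
    (W : ℝ → Ω → ℝ) (hW : IsStdBrownianMotion P W)
    (τ : Ω → ℝ) (hτ_meas : Measurable τ) (hτ_pos : ∀ ω, 0 < τ ω)
    (hindep : Indep (sigmaGen τ) (⨆ t : ℝ, sigmaGen (W t)) P) :
    ∀ t : ℝ, 0 ≤ t →
      MeasurableSet[rightFilt P (infoProc W τ) t] {ω | τ ω ≤ t} :=
  tau_stoppingTime_rightFilt_general P W hW τ
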